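/- Monotonicity under communication: for finite random variables X,Y and any function f on the alphabet of X, 𝕂(X, (Y, f(X))) ⊇ 𝕂(X, Y). -/

import Mathlib

open Finset

open Classical in
/-- Probability that random variable `X` (on finite weighted space `p`) equals `a`. -/
noncomputable def prob {Ω α : Type*} [Fintype Ω] (p : Ω → ℝ) (X : Ω → α) (a : α) : ℝ :=
  ∑ ω, if X ω = a then p ω else 0

/-- Shannon entropy of a random variable. -/
noncomputable def ent {Ω α : Type*} [Fintype Ω] [Fintype α] (p : Ω → ℝ) (X : Ω → α) : ℝ :=
  ∑ a, Real.negMulLog (prob p X a)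

/-- Conditional entropy H(X|Y). -/
noncomputable def condEnt {Ω α β : Type*} [Fintype Ω] [Fintype α] [Fintype β]
    (p : Ω → ℝ) (X : Ω → α) (Y : Ω → β) : ℝ :=
  ent p (fun ω => (X ω, Y ω)) - ent p Y

/-- Mutual information I(X;Y). -/
noncomputable def mi {Ω α β : Type*} [Fintype Ω] [Fintype α] [Fintype β]
    (p : Ω → ℝ) (X : Ω → α) (Y : Ω → β) : ℝ :=
  ent p X + ent p Y - ent p (fun ω => (X ω, Y ω))

/-- Conditional mutual information I(X;Y|Z). -/
noncomputable def cmi {Ω α β γ : Type*} [Fintype Ω] [Fintype α] [Fintype β] [Fintype γ]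
    (p : Ω → ℝ) (X : Ω → α) (Y : Ω → β) (Z : Ω → γ) : ℝ :=
  ent p (fun ω => (X ω, Z ω)) + ent p (fun ω => (Y ω, Z ω))
    - ent p (fun ω => ((X ω, Y ω), Z ω)) - ent p Z

/-- `p` is a probability mass function. -/
def IsPMF {Ω : Type*} [Fintype Ω] (p : Ω → ℝ) : Prop :=
  (∀ ω, 0 ≤ p ω) ∧ ∑ ω, p ω = 1

/-- Bipartite graph on 𝒳 ⊔ 𝒴 with an edge between x and y iff the joint pmf μ(x,y) > 0. -/
def edge {α β : Type*} (μ : α × β → ℝ) : α ⊕ β → α ⊕ β → Prop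
  | Sum.inl x, Sum.inr y => 0 < μ (x, y)
  | Sum.inr y, Sum.inl x => 0 < μ (x, y)
  | _, _ => False


/-- Assisted-common-information region 𝕂 of a joint pmf μ on α × β: upward closure of
the triples (I(Q;B|A), I(Q;A|B), I(A;B|Q)) over all auxiliary finite random variables Q,
realized on the canonical space α × β × Fin m with (A,B)-marginal μ. -/
noncomputable def KRegion {α β : Type*} [Fintype α] [Fintype β] (μ : α × β → ℝ) :
    Set (ℝ × ℝ × ℝ) :=
  { v | ∃ (m : ℕ) (ν : α × β × Fin m → ℝ),
      IsPMF ν ∧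
      (∀ ab, prob ν (fun ω => (ω.1, ω.2.1)) ab = μ ab) ∧
      cmi ν (fun ω => ω.2.2) (fun ω => ω.2.1) (fun ω => ω.1) ≤ v.1 ∧
      cmi ν (fun ω => ω.2.2) (fun ω => ω.1) (fun ω => ω.2.1) ≤ v.2.1 ∧
      cmi ν (fun ω => ω.1) (fun ω => ω.2.1) (fun ω => ω.2.2) ≤ v.2.2 ∧
      0 ≤ v.1 ∧ 0 ≤ v.2.1 ∧ 0 ≤ v.2.2 }

section basic
variable {Ω α β γ : Type*} [Fintype Ω]

lemma prob_nonneg (p : Ω → ℝ) (hp : ∀ ω, 0 ≤ p ω) (X : Ω → α) (a : α) :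
    0 ≤ prob p X a := by
  classical
  unfold prob
  apply Finset.sum_nonneg
  intro ω _
  split <;> simp [hp ω]

lemma sum_prob [Fintype α] (p : Ω → ℝ) (X : Ω → α) :
    ∑ a, prob p X a = ∑ ω, p ω := by
  classical
  unfold prob
  rw [Finset.sum_comm]
  refine Finset.sum_congr rfl fun ω _ => ?_
  simp

lemma prob_comp_inj (p : Ω → ℝ) (h : Ω → α) (j : α → β) (hj : Function.Injective j) (a : α) :
    prob p (fun ω => j (h ω)) (j a) = prob p h a := by
  classical
  unfold prob
  refine Finset.sum_congr rfl fun ω _ => ?_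
  simp [hj.eq_iff]

lemma prob_comp_ne (p : Ω → ℝ) (h : Ω → α) (j : α → β) (b : β) (hb : ∀ a, j a ≠ b) :
    prob p (fun ω => j (h ω)) b = 0 := by
  classical
  unfold prob
  exact Finset.sum_eq_zero fun ω _ => by rw [if_neg (hb _)]

lemma ent_comp_inj [Fintype α] [Fintype β] (p : Ω → ℝ) (h : Ω → α) (j : α → β)
    (hj : Function.Injective j) :
    ent p (fun ω => j (h ω)) = ent p h := by
  classical
  unfold ent
  rw [← Finset.sum_subset (Finset.subset_univ (Finset.univ.image j))
      (fun b _ hb => by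
        rw [prob_comp_ne p h j b, Real.negMulLog_zero]
        intro a hja
        exact hb (Finset.mem_image.2 ⟨a, Finset.mem_univ a, hja⟩)),
    Finset.sum_image (fun a _ a' _ hh => hj hh)]
  refine Finset.sum_congr rfl fun a _ => ?_
  rw [prob_comp_inj p h j hj a]

lemma prob_marg [Fintype α] (p : Ω → ℝ) (Z : Ω → α) (g : Ω → β) (b : β) :
    prob p g b = ∑ a, prob p (fun ω => (Z ω, g ω)) (a, b) := by
  classical
  unfold prob
  rw [Finset.sum_comm]
  refine Finset.sum_congr rfl fun ω _ => ?_
  simp only [Prod.ext_iff]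
  rw [Finset.sum_congr rfl (fun a _ => if_congr (and_comm (a := Z ω = a)) rfl rfl)]
  simp [ite_and]

end basic

section push
variable {Ω Ω' α : Type*} [Fintype Ω] [Fintype Ω']

open Classical in
noncomputable def push (ι : Ω → Ω') (p : Ω → ℝ) : Ω' → ℝ :=
  fun b => ∑ a, if ι a = b then p a else 0

lemma prob_push (ι : Ω → Ω') (p : Ω → ℝ) (Z : Ω' → α) (c : α) :
    prob (push ι p) Z c = prob p (fun a => Z (ι a)) c := by
  classical
  unfold prob push
  have : ∀ b : Ω', (if Z b = c then ∑ a, if ι a = b then p a else 0 else 0)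
      = ∑ a, if ι a = b then (if Z b = c then p a else 0) else 0 := by
    intro b
    split <;> simp
  rw [Finset.sum_congr rfl fun b _ => this b, Finset.sum_comm]
  refine Finset.sum_congr rfl fun a _ => ?_
  simp [Finset.sum_ite_eq]

lemma ent_push [Fintype α] (ι : Ω → Ω') (p : Ω → ℝ) (Z : Ω' → α) :
    ent (push ι p) Z = ent p (fun a => Z (ι a)) := by
  unfold ent
  exact Finset.sum_congr rfl fun a _ => by rw [prob_push]

lemma isPMF_push (ι : Ω → Ω') (p : Ω → ℝ) (hp : IsPMF p) : IsPMF (push ι p) := by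
  classical
  constructor
  · intro b
    exact Finset.sum_nonneg fun a _ => by split <;> simp [hp.1 a]
  · unfold push
    rw [Finset.sum_comm]
    rw [← hp.2]
    refine Finset.sum_congr rfl fun a _ => ?_
    simp [Finset.sum_ite_eq]

end push

open Real in

lemma sum3_comm {α β γ M : Type*} [Fintype α] [Fintype β] [Fintype γ] [AddCommMonoid M]
    (F : α → β → γ → M) :
    ∑ w : γ, ∑ u : α, ∑ v : β, F u v w = ∑ u, ∑ v, ∑ w, F u v w := by
  rw [Finset.sum_comm]
  exact Finset.sum_congr rfl fun u _ => Finset.sum_comm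

lemma sum3_comm' {α β γ M : Type*} [Fintype α] [Fintype β] [Fintype γ] [AddCommMonoid M]
    (F : α → β → γ → M) :
    ∑ v : β, ∑ w : γ, ∑ u : α, F u v w = ∑ u, ∑ v, ∑ w, F u v w := by
  rw [Finset.sum_congr rfl fun v _ => (Finset.sum_comm (f := fun w u => F u v w))]
  exact Finset.sum_comm

lemma key {α β γ : Type*} [Fintype α] [Fintype β] [Fintype γ]
    (P : α → β → γ → ℝ) (h0 : ∀ u v w, 0 ≤ P u v w) (h1 : ∑ u, ∑ v, ∑ w, P u v w = 1) :
    0 ≤ (∑ u, ∑ w, Real.negMulLog (∑ v, P u v w))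
      + (∑ v, ∑ w, Real.negMulLog (∑ u, P u v w))
      - (∑ u, ∑ v, ∑ w, Real.negMulLog (P u v w))
      - (∑ w, Real.negMulLog (∑ u, ∑ v, P u v w)) := by
  classical
  set A : α → γ → ℝ := fun u w => ∑ v, P u v w with hA
  set B : β → γ → ℝ := fun v w => ∑ u, P u v w with hB
  set C : γ → ℝ := fun w => ∑ u, ∑ v, P u v w with hC
  have hA0 : ∀ u w, 0 ≤ A u w := fun u w => Finset.sum_nonneg fun v _ => h0 u v w
  have hB0 : ∀ v w, 0 ≤ B v w := fun v w => Finset.sum_nonneg fun u _ => h0 u v w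
  have hC0 : ∀ w, 0 ≤ C w := fun w =>
    Finset.sum_nonneg fun u _ => Finset.sum_nonneg fun v _ => h0 u v w
  have hPA : ∀ u v w, P u v w ≤ A u w := fun u v w =>
    Finset.single_le_sum (f := fun v => P u v w) (fun i _ => h0 u i w) (mem_univ v)
  have hPB : ∀ u v w, P u v w ≤ B v w := fun u v w =>
    Finset.single_le_sum (f := fun u => P u v w) (fun i _ => h0 i v w) (mem_univ u)
  have hAC : ∀ u w, A u w ≤ C w := fun u w =>
    Finset.single_le_sum (f := fun u => A u w) (fun i _ => hA0 i w) (mem_univ u)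
  -- rewrite the expression as a single triple sum
  have e1 : ∑ u, ∑ w, Real.negMulLog (A u w)
      = ∑ u, ∑ v, ∑ w, -(P u v w * Real.log (A u w)) := by
    refine Finset.sum_congr rfl fun u _ => ?_
    rw [Finset.sum_comm]
    refine Finset.sum_congr rfl fun w _ => ?_
    rw [Real.negMulLog, hA, neg_mul, Finset.sum_mul]
    simp
  have e2 : ∑ v, ∑ w, Real.negMulLog (B v w)
      = ∑ u, ∑ v, ∑ w, -(P u v w * Real.log (B v w)) := by
    rw [← sum3_comm' (fun u v w => -(P u v w * Real.log (B v w)))]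
    refine Finset.sum_congr rfl fun v _ => Finset.sum_congr rfl fun w _ => ?_
    rw [Real.negMulLog, hB, neg_mul, Finset.sum_mul]
    simp
  have e3 : ∑ w, Real.negMulLog (C w)
      = ∑ u, ∑ v, ∑ w, -(P u v w * Real.log (C w)) := by
    rw [← sum3_comm (fun u v w => -(P u v w * Real.log (C w)))]
    refine Finset.sum_congr rfl fun w _ => ?_
    rw [Real.negMulLog, hC, neg_mul, Finset.sum_mul]
    rw [neg_eq_iff_eq_neg, ← Finset.sum_neg_distrib]
    refine Finset.sum_congr rfl fun u _ => ?_
    rw [Finset.sum_mul]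
    simp
  have hterm : ∀ u v w, P u v w - A u w * B v w / C w
      ≤ P u v w * (Real.log (P u v w) + Real.log (C w) - Real.log (A u w) - Real.log (B v w)) := by
    intro u v w
    rcases eq_or_lt_of_le (h0 u v w) with hP | hP
    · rw [← hP]
      have : 0 ≤ A u w * B v w / C w := div_nonneg (mul_nonneg (hA0 u w) (hB0 v w)) (hC0 w)
      simp only [zero_sub, zero_mul]
      linarith
    · have hAp : 0 < A u w := lt_of_lt_of_le hP (hPA u v w)
      have hBp : 0 < B v w := lt_of_lt_of_le hP (hPB u v w)
      have hCp : 0 < C w := lt_of_lt_of_le hAp (hAC u w)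
      have hr : Real.log (A u w * B v w / (P u v w * C w))
          ≤ A u w * B v w / (P u v w * C w) - 1 :=
        Real.log_le_sub_one_of_pos (by positivity)
      have hlog : Real.log (A u w * B v w / (P u v w * C w))
          = Real.log (A u w) + Real.log (B v w) - Real.log (P u v w) - Real.log (C w) := by
        rw [Real.log_div (by positivity) (by positivity), Real.log_mul hAp.ne' hBp.ne',
          Real.log_mul hP.ne' hCp.ne']
        ring
      have hmul := mul_le_mul_of_nonneg_left hr hP.le
      have hid : P u v w * (A u w * B v w / (P u v w * C w) - 1)
          = A u w * B v w / C w - P u v w := by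
        field_simp
      rw [hid, hlog] at hmul
      nlinarith [hmul]
  rw [e1, e2, e3]
  have ecomb : (∑ u, ∑ v, ∑ w, -(P u v w * Real.log (A u w)))
      + (∑ u, ∑ v, ∑ w, -(P u v w * Real.log (B v w)))
      - (∑ u, ∑ v, ∑ w, Real.negMulLog (P u v w))
      - (∑ u, ∑ v, ∑ w, -(P u v w * Real.log (C w)))
      = ∑ u, ∑ v, ∑ w, P u v w * (Real.log (P u v w) + Real.log (C w)
          - Real.log (A u w) - Real.log (B v w)) := by
    simp only [← Finset.sum_add_distrib, ← Finset.sum_sub_distrib]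
    refine Finset.sum_congr rfl fun u _ => Finset.sum_congr rfl fun v _ =>
      Finset.sum_congr rfl fun w _ => ?_
    rw [Real.negMulLog]
    ring
  rw [ecomb]
  have h5 : ∑ u, ∑ v, ∑ w, (P u v w - A u w * B v w / C w)
      ≤ ∑ u, ∑ v, ∑ w, P u v w * (Real.log (P u v w) + Real.log (C w)
          - Real.log (A u w) - Real.log (B v w)) :=
    Finset.sum_le_sum fun u _ => Finset.sum_le_sum fun v _ =>
      Finset.sum_le_sum fun w _ => hterm u v w
  have hsumC : ∑ w, C w = 1 := by
    rw [← h1, ← sum3_comm (fun u v w => P u v w)]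
  have h6 : ∑ u, ∑ v, ∑ w, (P u v w - A u w * B v w / C w)
      = 1 - ∑ w, C w * C w / C w := by
    simp only [Finset.sum_sub_distrib]
    rw [h1, ← sum3_comm (fun u v w => A u w * B v w / C w)]
    congr 1
    refine Finset.sum_congr rfl fun w _ => ?_
    have hBC : ∑ v, B v w = C w := by
      rw [hB, hC]
      exact Finset.sum_comm
    calc ∑ u, ∑ v, A u w * B v w / C w
        = ∑ u, A u w * C w / C w := by
          refine Finset.sum_congr rfl fun u _ => ?_
          rw [← Finset.sum_div, ← Finset.mul_sum, hBC]
      _ = C w * C w / C w := by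
          rw [← Finset.sum_div, ← Finset.sum_mul]
  have h7 : ∑ w, C w * C w / C w ≤ 1 := by
    rw [← hsumC]
    refine Finset.sum_le_sum fun w _ => ?_
    rcases eq_or_lt_of_le (hC0 w) with h | h
    · rw [← h]
      simp
    · rw [mul_div_assoc, div_self h.ne', mul_one]
  linarith

lemma cmi_nonneg {Ω α β γ : Type*} [Fintype Ω] [Fintype α] [Fintype β] [Fintype γ]
    (p : Ω → ℝ) (hp : IsPMF p) (U : Ω → α) (V : Ω → β) (W : Ω → γ) :
    0 ≤ cmi p U V W := by
  classical
  set P : α → β → γ → ℝ := fun u v w => prob p (fun ω => (U ω, (V ω, W ω))) (u, (v, w)) with hP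
  have h0 : ∀ u v w, 0 ≤ P u v w := fun u v w => prob_nonneg p hp.1 _ _
  have h1 : ∑ u, ∑ v, ∑ w, P u v w = 1 := by
    have := sum_prob p (fun ω => (U ω, (V ω, W ω)))
    rw [hp.2] at this
    rw [← this, Fintype.sum_prod_type]
    exact Finset.sum_congr rfl fun u _ =>
      (Fintype.sum_prod_type (fun y : β × γ => P u y.1 y.2)).symm
  have e1 : ent p (fun ω => (U ω, W ω)) = ∑ u, ∑ w, Real.negMulLog (∑ v, P u v w) := by
    rw [ent, Fintype.sum_prod_type]
    refine Finset.sum_congr rfl fun u _ => Finset.sum_congr rfl fun w _ => ?_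
    congr 1
    rw [prob_marg p V (fun ω => (U ω, W ω)) (u, w)]
    refine Finset.sum_congr rfl fun v _ => ?_
    have hj : Function.Injective (fun t : β × α × γ => (t.2.1, (t.1, t.2.2))) := by
      intro a b hab
      simp only [Prod.ext_iff] at hab ⊢
      tauto
    exact (prob_comp_inj p (fun ω => (V ω, (U ω, W ω)))
      (fun t => (t.2.1, (t.1, t.2.2))) hj (v, (u, w))).symm
  have e2 : ent p (fun ω => (V ω, W ω)) = ∑ v, ∑ w, Real.negMulLog (∑ u, P u v w) := by
    rw [ent, Fintype.sum_prod_type]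
    refine Finset.sum_congr rfl fun v _ => Finset.sum_congr rfl fun w _ => ?_
    congr 1
    exact prob_marg p U (fun ω => (V ω, W ω)) (v, w)
  have e3 : ent p (fun ω => ((U ω, V ω), W ω)) = ∑ u, ∑ v, ∑ w, Real.negMulLog (P u v w) := by
    have hj : Function.Injective (fun t : α × β × γ => ((t.1, t.2.1), t.2.2)) := by
      intro a b hab
      simp only [Prod.ext_iff] at hab ⊢
      tauto
    have h' : (ent p fun ω => ((U ω, V ω), W ω)) = ent p (fun ω => (U ω, (V ω, W ω))) :=
      ent_comp_inj p (fun ω => (U ω, (V ω, W ω))) (fun t => ((t.1, t.2.1), t.2.2)) hj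
    rw [h', ent, Fintype.sum_prod_type]
    exact Finset.sum_congr rfl fun u _ => by rw [Fintype.sum_prod_type]
  have e4 : ent p W = ∑ w, Real.negMulLog (∑ u, ∑ v, P u v w) := by
    rw [ent]
    refine Finset.sum_congr rfl fun w _ => ?_
    congr 1
    rw [prob_marg p (fun ω => (U ω, V ω)) W w, Fintype.sum_prod_type]
    refine Finset.sum_congr rfl fun u _ => Finset.sum_congr rfl fun v _ => ?_
    have hj : Function.Injective (fun t : α × β × γ => ((t.1, t.2.1), t.2.2)) := by
      intro a b hab
      simp only [Prod.ext_iff] at hab ⊢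
      tauto
    exact prob_comp_inj p (fun ω => (U ω, (V ω, W ω)))
      (fun t => ((t.1, t.2.1), t.2.2)) hj (u, (v, w))
  rw [cmi, e1, e2, e3, e4]
  exact key P h0 h1

open Classical in
private lemma prob_comp_sum {Ω α β : Type*} [Fintype Ω] [Fintype α]
    (p : Ω → ℝ) (h : Ω → α) (j : α → β) (b : β) :
    prob p (fun ω => j (h ω)) b = ∑ a, if j a = b then prob p h a else 0 := by
  unfold prob
  have hsplit : ∀ a : α, (if j a = b then ∑ ω, if h ω = a then p ω else 0 else 0)
      = ∑ ω, if h ω = a then (if j a = b then p ω else 0) else 0 := by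
    intro a
    split <;> simp
  rw [Finset.sum_congr rfl fun a _ => hsplit a, Finset.sum_comm]
  refine Finset.sum_congr rfl fun ω _ => ?_
  simp [Finset.sum_ite_eq']

theorem stmt13 {Ω 𝒳 𝒴 ℳ : Type*} [Fintype Ω] [Fintype 𝒳] [Fintype 𝒴] [Fintype ℳ]
    (p : Ω → ℝ) (hp : IsPMF p) (X : Ω → 𝒳) (Y : Ω → 𝒴) (f : 𝒳 → ℳ) :
    KRegion (fun ab => prob p (fun ω => (X ω, Y ω)) ab)
      ⊆ KRegion (fun ab => prob p (fun ω => (X ω, (Y ω, f (X ω)))) ab) := by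
  classical
  intro v hv
  simp only [KRegion, Set.mem_setOf_eq] at hv ⊢
  obtain ⟨m, ν, hν, hmarg, h1, h2, h3, hv1, hv2, hv3⟩ := hv
  set e : Fin m × ℳ ≃ Fin (Fintype.card (Fin m × ℳ)) := Fintype.equivFin (Fin m × ℳ) with he
  set ι : 𝒳 × 𝒴 × Fin m → 𝒳 × (𝒴 × ℳ) × Fin (Fintype.card (Fin m × ℳ)) :=
    fun ω => (ω.1, ((ω.2.1, f ω.1), e (ω.2.2, f ω.1))) with hι
  refine ⟨_, push ι ν, isPMF_push ι ν hν, ?_, ?_, ?_, ?_, hv1, hv2, hv3⟩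
  · -- marginal condition
    intro ab
    rw [prob_push]
    have hl := prob_comp_sum ν (fun ω : 𝒳 × 𝒴 × Fin m => (ω.1, ω.2.1))
      (fun t => (t.1, (t.2, f t.1))) ab
    have hr := prob_comp_sum p (fun ω => (X ω, Y ω)) (fun t => (t.1, (t.2, f t.1))) ab
    exact hl.trans ((Finset.sum_congr rfl fun t _ => by rw [hmarg t]).trans hr.symm)
  · -- first cmi
    have E31 : ent (push ι ν) (fun ω => (ω.2.2, ω.1)) = ent ν (fun ω => (ω.2.2, ω.1)) := by
      rw [ent_push]
      exact ent_comp_inj ν (fun ω => (ω.2.2, ω.1))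
        (fun t : Fin m × 𝒳 => (e (t.1, f t.2), t.2)) (by
          intro a b hab
          simp only [Prod.ext_iff, EmbeddingLike.apply_eq_iff_eq] at hab ⊢
          tauto)
    have E32 : ent (push ι ν) (fun ω => (ω.2.1, ω.1)) = ent ν (fun ω => (ω.2.1, ω.1)) := by
      rw [ent_push]
      exact ent_comp_inj ν (fun ω => (ω.2.1, ω.1))
        (fun t : 𝒴 × 𝒳 => ((t.1, f t.2), t.2)) (by
          intro a b hab
          simp only [Prod.ext_iff] at hab ⊢
          tauto)
    have E33 : ent (push ι ν) (fun ω => ((ω.2.2, ω.2.1), ω.1))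
        = ent ν (fun ω => ((ω.2.2, ω.2.1), ω.1)) := by
      rw [ent_push]
      exact ent_comp_inj ν (fun ω => ((ω.2.2, ω.2.1), ω.1))
        (fun t : (Fin m × 𝒴) × 𝒳 => ((e (t.1.1, f t.2), (t.1.2, f t.2)), t.2)) (by
          intro a b hab
          simp only [Prod.ext_iff, EmbeddingLike.apply_eq_iff_eq] at hab ⊢
          tauto)
    have E34 : ent (push ι ν) (fun ω => ω.1) = ent ν (fun ω => ω.1) := by
      rw [ent_push]
    simp only [cmi] at h1 ⊢
    rw [E31, E32, E33, E34]
    exact h1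
  · -- second cmi
    have E41 : ent (push ι ν) (fun ω => (ω.2.2, ω.2.1))
        = ent ν (fun ω => ((f ω.1, ω.2.2), ω.2.1)) := by
      rw [ent_push]
      exact ent_comp_inj ν (fun ω => ((f ω.1, ω.2.2), ω.2.1))
        (fun t : (ℳ × Fin m) × 𝒴 => (e (t.1.2, t.1.1), (t.2, t.1.1))) (by
          intro a b hab
          simp only [Prod.ext_iff, EmbeddingLike.apply_eq_iff_eq] at hab ⊢
          tauto)
    have E42 : ent (push ι ν) (fun ω => (ω.1, ω.2.1)) = ent ν (fun ω => (ω.1, ω.2.1)) := by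
      rw [ent_push]
      exact ent_comp_inj ν (fun ω => (ω.1, ω.2.1))
        (fun t : 𝒳 × 𝒴 => (t.1, (t.2, f t.1))) (by
          intro a b hab
          simp only [Prod.ext_iff] at hab ⊢
          tauto)
    have E43 : ent (push ι ν) (fun ω => ((ω.2.2, ω.1), ω.2.1))
        = ent ν (fun ω => ((ω.2.2, ω.1), ω.2.1)) := by
      rw [ent_push]
      exact ent_comp_inj ν (fun ω => ((ω.2.2, ω.1), ω.2.1))
        (fun t : (Fin m × 𝒳) × 𝒴 => ((e (t.1.1, f t.1.2), t.1.2), (t.2, f t.1.2))) (by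
          intro a b hab
          simp only [Prod.ext_iff, EmbeddingLike.apply_eq_iff_eq] at hab ⊢
          tauto)
    have E44 : ent (push ι ν) (fun ω => ω.2.1) = ent ν (fun ω => (f ω.1, ω.2.1)) := by
      rw [ent_push]
      exact ent_comp_inj ν (fun ω => (f ω.1, ω.2.1))
        (fun t : ℳ × 𝒴 => (t.2, t.1)) (by
          intro a b hab
          simp only [Prod.ext_iff] at hab ⊢
          tauto)
    have hnn := cmi_nonneg ν hν (fun ω => f ω.1) (fun ω => ω.2.2) (fun ω => ω.2.1)
    simp only [cmi] at h2 hnn ⊢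
    rw [E41, E42, E43, E44]
    linarith
  · -- third cmi
    have E51 : ent (push ι ν) (fun ω => (ω.1, ω.2.2)) = ent ν (fun ω => (ω.1, ω.2.2)) := by
      rw [ent_push]
      exact ent_comp_inj ν (fun ω => (ω.1, ω.2.2))
        (fun t : 𝒳 × Fin m => (t.1, e (t.2, f t.1))) (by
          intro a b hab
          simp only [Prod.ext_iff, EmbeddingLike.apply_eq_iff_eq] at hab ⊢
          tauto)
    have E52 : ent (push ι ν) (fun ω => (ω.2.1, ω.2.2))
        = ent ν (fun ω => ((f ω.1, ω.2.1), ω.2.2)) := by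
      rw [ent_push]
      exact ent_comp_inj ν (fun ω => ((f ω.1, ω.2.1), ω.2.2))
        (fun t : (ℳ × 𝒴) × Fin m => ((t.1.2, t.1.1), e (t.2, t.1.1))) (by
          intro a b hab
          simp only [Prod.ext_iff, EmbeddingLike.apply_eq_iff_eq] at hab ⊢
          tauto)
    have E53 : ent (push ι ν) (fun ω => ((ω.1, ω.2.1), ω.2.2))
        = ent ν (fun ω => ((ω.1, ω.2.1), ω.2.2)) := by
      rw [ent_push]
      exact ent_comp_inj ν (fun ω => ((ω.1, ω.2.1), ω.2.2))
        (fun t : (𝒳 × 𝒴) × Fin m => ((t.1.1, (t.1.2, f t.1.1)), e (t.2, f t.1.1))) (by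
          intro a b hab
          simp only [Prod.ext_iff, EmbeddingLike.apply_eq_iff_eq] at hab ⊢
          tauto)
    have E54 : ent (push ι ν) (fun ω => ω.2.2) = ent ν (fun ω => (f ω.1, ω.2.2)) := by
      rw [ent_push]
      exact ent_comp_inj ν (fun ω => (f ω.1, ω.2.2))
        (fun t : ℳ × Fin m => e (t.2, t.1)) (by
          intro a b hab
          simp only [Prod.ext_iff, EmbeddingLike.apply_eq_iff_eq] at hab ⊢
          tauto)
    have hnn := cmi_nonneg ν hν (fun ω => f ω.1) (fun ω => ω.2.1) (fun ω => ω.2.2)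
    simp only [cmi] at h3 hnn ⊢
    rw [E51, E52, E53, E54]
    linarith
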